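/- arXiv:2107.12624 — 2 statements merged into one kernel-verified Lean document; each statement's English description precedes it below -/
import Mathlib

section
/- Let f_1, …, f_k be McNaughton functions on [0,1]^n, let C_Φ ⊆ ℝ^k be the convex hull of {(f_1(x), …, f_k(x)) : x ∈ [0,1]^n}, and let β be a book on f_1, …, f_k. Then β is strictly coherent if and only if the point (β_1, …, β_k) belongs to C_Φ and does not belong to the relative boundary of C_Φ. -/
open Set MeasureTheory

/-- The unit cube `[0,1]^n` in `ℝ^n`. -/
def cube (n : ℕ) : Set (Fin n → ℝ) := Set.Icc 0 1

/-- `f` is a McNaughton function on `[0,1]^n`: continuous on the cube, `[0,1]`-valued there,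
and piecewise affine with integer coefficients. -/
def IsMcNaughton (n : ℕ) (f : (Fin n → ℝ) → ℝ) : Prop :=
  ContinuousOn f (cube n) ∧
  (∀ x ∈ cube n, f x ∈ Set.Icc (0 : ℝ) 1) ∧
  ∃ (m : ℕ) (a : Fin m → Fin n → ℤ) (b : Fin m → ℤ),
    ∀ x ∈ cube n, ∃ j : Fin m, f x = (b j : ℝ) + ∑ i, (a j i : ℝ) * x i

/-- The book `β` on `f 0, …, f (k-1)` is strictly coherent: every possibility of loss
for the bookmaker is paired by a possibility of gain. -/
def StrictlyCoherent (n k : ℕ) (f : Fin k → (Fin n → ℝ) → ℝ) (β : Fin k → ℝ) : Prop :=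
  ∀ σ : Fin k → ℝ, (∃ x ∈ cube n, ∑ i, σ i * (β i - f i x) < 0) →
    ∃ x' ∈ cube n, 0 < ∑ i, σ i * (β i - f i x')

/-!
Read a bet `σ` as the linear functional `ℓ = σ ⬝ᵥ ·`, so that `σ ⬝ᵥ (β - f x) < 0` exactly when
`ℓ β < ℓ (f x)`. A linear functional exceeds (or stays below) `ℓ β` somewhere on the convex hull
`C` iff it does so on the image of the cube, so strict coherence says that no linear functional
attains its minimum over `C` at `β` without being constant on `C`. If `β ∉ C` (here `C` is compact,
hence closed) a separating functional violates this; if `β ∈ C` lies on the relative boundary,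
separating `β` from the interior of `C` inside its affine span gives a supporting functional
that is not constant on `C`. Conversely, from a relative interior point `β` one can step slightly
away from any `c ∈ C` and stay in `C`, which decreases every functional that increases from `β`
to `c`.
-/

open Filter Topology

section

variable {E : Type*} [NormedAddCommGroup E] [NormedSpace ℝ E]

/-- Carathéodory's theorem, with the number of points padded to `finrank ℝ E + 1`. -/
theorem exists_sum_smul_eq_of_mem_convexHull [FiniteDimensional ℝ E] {s : Set E} {x : E}
    (hx : x ∈ convexHull ℝ s) :
    ∃ w ∈ stdSimplex ℝ (Fin (Module.finrank ℝ E + 1)), ∃ z : Fin (Module.finrank ℝ E + 1) → E,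
      (∀ j, z j ∈ s) ∧ ∑ j, w j • z j = x := by
  classical
  obtain ⟨y₀, hy₀⟩ := convexHull_nonempty_iff.1 ⟨x, hx⟩
  obtain ⟨ι, _, z, w, hzs, hz, hw, hw₁, rfl⟩ := eq_pos_convex_span_of_mem_convexHull hx
  obtain ⟨e⟩ : Nonempty (ι ↪ Fin (Module.finrank ℝ E + 1)) := by
    refine Function.Embedding.nonempty_of_card_le ?_
    simpa using hz.card_le_finrank_succ.trans (Nat.succ_le_succ (Submodule.finrank_le _))
  have hw₀ (j) (hj : j ∉ range e) : Function.extend e w 0 j = 0 := Function.extend_apply' _ _ _ hj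
  refine ⟨Function.extend e w 0, ⟨fun j => ?_, ?_⟩, Function.extend e z fun _ => y₀,
    fun j => ?_, ?_⟩
  · by_cases hj : j ∈ range e
    · obtain ⟨i, rfl⟩ := hj
      simpa [e.injective.extend_apply] using (hw i).le
    · simp [hw₀ j hj]
  · rw [← hw₁]
    exact (Fintype.sum_of_injective e e.injective _ _ hw₀
      fun i => (e.injective.extend_apply ..).symm).symm
  · by_cases hj : j ∈ range e
    · obtain ⟨i, rfl⟩ := hj
      simpa [e.injective.extend_apply] using hzs (mem_range_self i)
    · simpa [Function.extend_apply' _ _ _ hj] using hy₀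
  · refine (Fintype.sum_of_injective e e.injective _ _ (fun j hj => ?_) fun i => ?_).symm
    · simp [hw₀ j hj]
    · simp [e.injective.extend_apply]

theorem IsCompact.convexHull [FiniteDimensional ℝ E] {s : Set E} (hs : IsCompact s) :
    IsCompact (convexHull ℝ s) := by
  let d := Module.finrank ℝ E
  suffices _root_.convexHull ℝ s = (fun p : (Fin (d + 1) → ℝ) × (Fin (d + 1) → E) =>
      ∑ j, p.1 j • p.2 j) '' (stdSimplex ℝ (Fin (d + 1)) ×ˢ univ.pi fun _ => s) by
    rw [this]
    exact ((isCompact_stdSimplex ℝ _).prod (isCompact_univ_pi fun _ => hs)).image (by fun_prop)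
  refine Subset.antisymm (fun x hx => ?_) ?_
  · obtain ⟨w, hw, z, hz, rfl⟩ := exists_sum_smul_eq_of_mem_convexHull hx
    exact ⟨(w, z), ⟨hw, fun j _ => hz j⟩, rfl⟩
  · rintro _ ⟨⟨w, z⟩, ⟨hw, hz⟩, rfl⟩
    exact mem_convexHull_of_exists_fintype w z hw.1 hw.2 (fun j => hz j trivial) rfl

theorem LinearMap.exists_mem_convexHull_apply_lt_iff (ℓ : E →ₗ[ℝ] ℝ) (s : Set E) (a : ℝ) :
    (∃ c ∈ convexHull ℝ s, ℓ c < a) ↔ ∃ y ∈ s, ℓ y < a := by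
  refine ⟨fun ⟨c, hc, hca⟩ => ?_, fun ⟨y, hy, hya⟩ => ⟨y, subset_convexHull ℝ s hy, hya⟩⟩
  obtain ⟨y, hy, hyc⟩ := (ℓ.concaveOn convex_univ).exists_le_of_mem_convexHull (subset_univ s) hc
  exact ⟨y, hy, hyc.trans_lt hca⟩

theorem LinearMap.exists_mem_convexHull_lt_apply_iff (ℓ : E →ₗ[ℝ] ℝ) (s : Set E) (a : ℝ) :
    (∃ c ∈ convexHull ℝ s, a < ℓ c) ↔ ∃ y ∈ s, a < ℓ y := by
  simpa using (-ℓ).exists_mem_convexHull_apply_lt_iff s (-a)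

theorem mem_and_notMem_intrinsicFrontier_iff {s : Set E} {x : E} :
    x ∈ s ∧ x ∉ intrinsicFrontier ℝ s ↔ x ∈ intrinsicInterior ℝ s := by
  rw [← intrinsicClosure_sdiff_intrinsicInterior, Set.mem_sdiff, not_and_not_right]
  exact ⟨fun ⟨hs, h⟩ => h (subset_intrinsicClosure hs),
    fun h => ⟨intrinsicInterior_subset h, fun _ => h⟩⟩

theorem exists_apply_lt_of_mem_intrinsicInterior {C : Set E} {x c : E}
    (hx : x ∈ intrinsicInterior ℝ C) (hc : c ∈ C) (ℓ : E →ₗ[ℝ] ℝ) (hxc : ℓ x < ℓ c) :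
    ∃ c' ∈ C, ℓ c' < ℓ x := by
  obtain ⟨x, hx, rfl⟩ := hx
  have hline (t : ℝ) : AffineMap.lineMap (x : E) c t ∈ affineSpan ℝ C :=
    AffineMap.lineMap_mem t x.2 (subset_affineSpan ℝ C hc)
  have hcont : Continuous fun t : ℝ => (⟨_, hline t⟩ : affineSpan ℝ C) :=
    (AffineMap.lineMap_continuous).subtype_mk _
  have hnear : ∀ᶠ t in 𝓝 (0 : ℝ), AffineMap.lineMap (x : E) c t ∈ C :=
    (hcont.tendsto' 0 x (by simp)).eventually (mem_interior_iff_mem_nhds.1 hx)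
  obtain ⟨t, ht, ht₀⟩ := ((eventually_nhdsWithin_of_eventually_nhds hnear).and
    (self_mem_nhdsWithin : ∀ᶠ t in 𝓝[<] (0 : ℝ), t < 0)).exists
  refine ⟨_, ht, ?_⟩
  rw [AffineMap.lineMap_apply_module', map_add, map_smul, map_sub, smul_eq_mul]
  linarith [mul_neg_of_neg_of_pos ht₀ (sub_pos.2 hxc)]

theorem Convex.exists_forall_le_of_notMem_interior {C : Set E} (hC : Convex ℝ C)
    (hint : (interior C).Nonempty) {x : E} (hx : x ∉ interior C) :
    ∃ ℓ : StrongDual ℝ E, (∀ c ∈ C, ℓ x ≤ ℓ c) ∧ ∃ c ∈ C, ℓ x < ℓ c := by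
  obtain ⟨ℓ, hℓ⟩ := geometric_hahn_banach_point_open hC.interior isOpen_interior hx
  have hclosure : C ⊆ closure (interior C) := by
    rw [hC.closure_interior_eq_closure_of_nonempty_interior hint]; exact subset_closure
  refine ⟨ℓ, fun c hc => ?_, ?_⟩
  · exact closure_minimal (fun b hb => (hℓ b hb).le) (isClosed_le continuous_const ℓ.continuous)
      (hclosure hc)
  · obtain ⟨c, hc⟩ := hint
    exact ⟨c, interior_subset hc, hℓ c hc⟩

theorem Convex.exists_forall_le_of_notMem_intrinsicInterior [FiniteDimensional ℝ E] {C : Set E}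
    (hC : Convex ℝ C) {x : E} (hxC : x ∈ C) (hx : x ∉ intrinsicInterior ℝ C) :
    ∃ ℓ : E →ₗ[ℝ] ℝ, (∀ c ∈ C, ℓ x ≤ ℓ c) ∧ ∃ c ∈ C, ℓ x < ℓ c := by
  -- Translating by `x` identifies `affineSpan ℝ C` with its direction, in which (the preimage
  -- of) `C` has nonempty interior that does not contain `0`.
  set A := affineSpan ℝ C
  let x' : A := ⟨x, subset_affineSpan ℝ C hxC⟩
  have : Nonempty A := ⟨x'⟩
  let e := AffineIsometryEquiv.vaddConst ℝ x'
  let D : Set A.direction := e ⁻¹' ((↑) ⁻¹' C)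
  have he (v : A.direction) : (e v : E) = v + x := rfl
  have hD : interior D = e ⁻¹' interior ((↑) ⁻¹' C) := (e.toHomeomorph.preimage_interior _).symm
  have hint : (interior D).Nonempty := by
    obtain ⟨_, p, hp, rfl⟩ := Set.Nonempty.intrinsicInterior hC ⟨x, hxC⟩
    exact ⟨e.symm p, by simpa [hD] using hp⟩
  have h₀ : (0 : A.direction) ∉ interior D := by
    rw [hD]
    exact fun h => hx ⟨_, h, by simp [he]⟩
  have hDconv : Convex ℝ D := hC.affine_preimage (A.subtype.comp e.toAffineEquiv.toAffineMap)
  obtain ⟨g, hg, c, hc, hgc⟩ := hDconv.exists_forall_le_of_notMem_interior hint h₀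
  obtain ⟨ℓ, hℓ⟩ := LinearMap.exists_extend (g : A.direction →ₗ[ℝ] ℝ)
  have hℓe (v : A.direction) : ℓ (e v) = g v + ℓ x := by
    rw [he, map_add, ← ContinuousLinearMap.coe_coe g, ← hℓ]; rfl
  refine ⟨ℓ, fun c hc => ?_, e c, hc, ?_⟩
  · have hcx : c -ᵥ x ∈ A.direction :=
      A.vsub_mem_direction (subset_affineSpan ℝ C hc) (subset_affineSpan ℝ C hxC)
    have hec : (e ⟨c -ᵥ x, hcx⟩ : E) = c := by simp [he]
    have hle := hg ⟨c -ᵥ x, hcx⟩ (show (e _ : E) ∈ C by rwa [hec])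
    rw [← hec, hℓe]
    simpa using hle
  · rw [hℓe]; simpa using hgc

theorem mem_intrinsicInterior_iff_forall_exists_lt [FiniteDimensional ℝ E] {C : Set E}
    (hC : Convex ℝ C) (hCc : IsClosed C) (hne : C.Nonempty) {x : E} :
    x ∈ intrinsicInterior ℝ C ↔ ∀ ℓ : E →ₗ[ℝ] ℝ, (∃ c ∈ C, ℓ x < ℓ c) → ∃ c ∈ C, ℓ c < ℓ x := by
  refine ⟨fun hx ℓ ⟨c, hc, hxc⟩ => exists_apply_lt_of_mem_intrinsicInterior hx hc ℓ hxc, ?_⟩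
  contrapose!
  intro hx
  by_cases hxC : x ∈ C
  · obtain ⟨ℓ, hℓ, hlt⟩ := hC.exists_forall_le_of_notMem_intrinsicInterior hxC hx
    exact ⟨ℓ, hlt, hℓ⟩
  · obtain ⟨ℓ, u, hxu, hu⟩ := geometric_hahn_banach_point_closed hC hCc hxC
    obtain ⟨c, hc⟩ := hne
    exact ⟨ℓ, ⟨c, hc, hxu.trans (hu c hc)⟩, fun c hc => (hxu.trans (hu c hc)).le⟩

end

theorem strictlyCoherent_iff {n k : ℕ} {f : Fin k → (Fin n → ℝ) → ℝ} {β : Fin k → ℝ} :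
    StrictlyCoherent n k f β ↔ ∀ ℓ : Module.Dual ℝ (Fin k → ℝ),
      (∃ y ∈ (fun x i => f i x) '' cube n, ℓ β < ℓ y) →
        ∃ y ∈ (fun x i => f i x) '' cube n, ℓ y < ℓ β := by
  rw [← (dotProductEquiv ℝ (Fin k)).toEquiv.forall_congr_right]
  refine forall_congr' fun σ => ?_
  have hdot (y : Fin k → ℝ) : ∑ i, σ i * (β i - y i) = σ ⬝ᵥ β - σ ⬝ᵥ y := dotProduct_sub σ β y
  simp only [exists_mem_image, hdot, sub_neg, sub_pos]
  rfl

theorem stmt12_general (n k : ℕ) (f : Fin k → (Fin n → ℝ) → ℝ) (hf : ∀ i, IsMcNaughton n (f i))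
    (β : Fin k → ℝ) :
    StrictlyCoherent n k f β ↔
      β ∈ convexHull ℝ ((fun x => fun i => f i x) '' cube n) ∧
      β ∉ intrinsicFrontier ℝ (convexHull ℝ ((fun x => fun i => f i x) '' cube n)) := by
  set Φ := (fun x => fun i => f i x) '' cube n
  have hΦ : IsCompact Φ :=
    isCompact_Icc.image_of_continuousOn (continuousOn_pi.2 fun i => (hf i).1)
  have hΦne : Φ.Nonempty := (nonempty_Icc.2 zero_le_one).image _
  rw [mem_and_notMem_intrinsicFrontier_iff, mem_intrinsicInterior_iff_forall_exists_lt
    (convex_convexHull ℝ Φ) hΦ.convexHull.isClosed hΦne.convexHull, strictlyCoherent_iff]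
  simp only [LinearMap.exists_mem_convexHull_apply_lt_iff,
    LinearMap.exists_mem_convexHull_lt_apply_iff]
  rfl

theorem stmt12 (n k : ℕ) (f : Fin k → (Fin n → ℝ) → ℝ) (hf : ∀ i, IsMcNaughton n (f i))
    (β : Fin k → ℝ) (hβ : ∀ i, β i ∈ Set.Icc (0 : ℝ) 1) :
    StrictlyCoherent n k f β ↔
      β ∈ convexHull ℝ ((fun x => fun i => f i x) '' cube n) ∧
      β ∉ intrinsicFrontier ℝ (convexHull ℝ ((fun x => fun i => f i x) '' cube n)) :=
  stmt12_general n k f hf β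
end

section
/- For every rational polytope P contained in [0,1]^k there exists a McNaughton function g on [0,1]^k whose oneset {x ∈ [0,1]^k : g(x) = 1} equals P. -/
/-!
A rational polytope is cut out by finitely many inequalities with integer coefficients (Weyl's
theorem over `ℚ`): it is the projection of the polyhedron of pairs (point, barycentric weights),
which is defined by rational inequalities, and Fourier–Motzkin elimination of the weights keeps
the inequalities rational. If `P = {x | 0 ≤ ℓ x for ℓ ∈ S}` for integer affine functions `ℓ`, then
`x ↦ max 0 (1 + ∑ ℓ ∈ S, min 0 (ℓ x))` is continuous, `[0,1]`-valued, piecewise integer affine,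
and equal to `1` exactly on `P`.
-/

open Set MeasureTheory

variable {ι κ 𝕜 : Type*}

section CommRing

variable [Fintype ι] [CommRing 𝕜]

/-- The integer affine function `x ↦ b + ∑ i, a i * x i` encoded by `p = (a, b)`. -/
def intAffine (p : (ι → ℤ) × ℤ) (x : ι → 𝕜) : 𝕜 := p.2 + ∑ i, (p.1 i : 𝕜) * x i

@[simp]
theorem intAffine_add (p q : (ι → ℤ) × ℤ) (x : ι → 𝕜) :
    intAffine (p + q) x = intAffine p x + intAffine q x := by
  simp only [intAffine, Prod.fst_add, Prod.snd_add, Pi.add_apply, Int.cast_add, add_mul,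
    Finset.sum_add_distrib]
  ring

@[simp]
theorem intAffine_zsmul (n : ℤ) (p : (ι → ℤ) × ℤ) (x : ι → 𝕜) :
    intAffine (n • p) x = n * intAffine p x := by
  simp only [intAffine, Prod.smul_fst, Prod.smul_snd, Pi.smul_apply, smul_eq_mul, Int.cast_mul,
    mul_add, Finset.mul_sum, mul_assoc]

@[simp]
theorem intAffine_neg (p : (ι → ℤ) × ℤ) (x : ι → 𝕜) : intAffine (-p) x = -intAffine p x := by
  simpa using intAffine_zsmul (-1) p x

theorem intAffine_update [DecidableEq ι] (p : (ι → ℤ) × ℤ) (x : ι → 𝕜) (a : ι) (y : 𝕜) :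
    intAffine p (Function.update x a y) = intAffine p x + p.1 a * (y - x a) := by
  have h : ∀ i, (p.1 i : 𝕜) * Function.update x a y i
      = p.1 i * x i + (Pi.single a ((p.1 a : 𝕜) * (y - x a)) : ι → 𝕜) i := by
    intro i
    rcases eq_or_ne i a with rfl | hi
    · simp only [Function.update_self, Pi.single_eq_same]
      ring
    · simp [hi]
  simp only [intAffine, h, Finset.sum_add_distrib, Finset.sum_pi_single', Finset.mem_univ,
    if_true]
  ring

section LinearOrder

variable [LinearOrder 𝕜]

/-- A rational polyhedron, presented by finitely many inequalities with integer coefficients. -/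
def IsRationalPolyhedron (s : Set (ι → 𝕜)) : Prop :=
  ∃ S : Set ((ι → ℤ) × ℤ), S.Finite ∧ s = {x | ∀ p ∈ S, 0 ≤ intAffine p x}

namespace IsRationalPolyhedron

theorem setOf_nonneg (p : (ι → ℤ) × ℤ) :
    IsRationalPolyhedron {x : ι → 𝕜 | 0 ≤ intAffine p x} :=
  ⟨{p}, finite_singleton p, by simp⟩

theorem inter {s t : Set (ι → 𝕜)} (hs : IsRationalPolyhedron s) (ht : IsRationalPolyhedron t) :
    IsRationalPolyhedron (s ∩ t) := by
  obtain ⟨S, hS, rfl⟩ := hs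
  obtain ⟨T, hT, rfl⟩ := ht
  exact ⟨S ∪ T, hS.union hT, by ext; simp [or_imp, forall_and]⟩

theorem iInter [Finite κ] {s : κ → Set (ι → 𝕜)} (hs : ∀ j, IsRationalPolyhedron (s j)) :
    IsRationalPolyhedron (⋂ j, s j) := by
  choose S hS hs using hs
  refine ⟨⋃ j, S j, finite_iUnion hS, ?_⟩
  ext x
  simp only [hs, mem_iInter, mem_ofPred_eq, mem_iUnion]
  exact ⟨fun h p ⟨j, hp⟩ => h j p hp, fun h j p hp => h p ⟨j, hp⟩⟩

end IsRationalPolyhedron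

end LinearOrder

end CommRing

def fourierMotzkin (S : Set ((ι → ℤ) × ℤ)) (a : ι) : Set ((ι → ℤ) × ℤ) :=
  {p ∈ S | p.1 a = 0} ∪
    image2 (fun p q => (-q.1 a) • p + p.1 a • q) {p ∈ S | 0 < p.1 a} {q ∈ S | q.1 a < 0}

theorem Set.Finite.fourierMotzkin {S : Set ((ι → ℤ) × ℤ)} (hS : S.Finite) (a : ι) :
    (fourierMotzkin S a).Finite :=
  (hS.sep _).union ((hS.sep _).image2 _ (hS.sep _))

theorem coeff_eq_zero_of_mem_fourierMotzkin {S : Set ((ι → ℤ) × ℤ)} {a : ι} {r : (ι → ℤ) × ℤ}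
    (hr : r ∈ fourierMotzkin S a) : r.1 a = 0 := by
  rcases hr with ⟨-, hr⟩ | ⟨p, -, q, -, rfl⟩
  · exact hr
  · simp only [Prod.fst_add, Prod.smul_fst, Pi.add_apply, Pi.smul_apply, smul_eq_mul]
    ring

theorem Set.Finite.exists_between_of_forall_le {α : Type*} [LinearOrder α] [Nonempty α]
    {L U : Set α} (hL : L.Finite) (hU : U.Finite) (h : ∀ l ∈ L, ∀ u ∈ U, l ≤ u) :
    (upperBounds L ∩ lowerBounds U).Nonempty := by
  rcases L.eq_empty_or_nonempty with rfl | hLne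
  · obtain ⟨t, ht⟩ := hU.bddBelow
    exact ⟨t, by simp, ht⟩
  · obtain ⟨l, hl, hmax⟩ := L.exists_max_image id hL hLne
    exact ⟨l, hmax, fun u hu => h l hl u hu⟩

section Field

variable [Field 𝕜] [LinearOrder 𝕜] [IsStrictOrderedRing 𝕜] [Fintype ι]

theorem intAffine_nonneg_of_mem_fourierMotzkin {S : Set ((ι → ℤ) × ℤ)}
    {a : ι} {x : ι → 𝕜} (hx : ∀ p ∈ S, 0 ≤ intAffine p x) {r : (ι → ℤ) × ℤ}
    (hr : r ∈ fourierMotzkin S a) : 0 ≤ intAffine r x := by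
  rcases hr with ⟨hr, -⟩ | ⟨p, ⟨hp, hpa⟩, q, ⟨hq, hqa⟩, rfl⟩
  · exact hx r hr
  · have hpa' : (0 : 𝕜) ≤ p.1 a := by exact_mod_cast hpa.le
    have hqa' : (0 : 𝕜) ≤ ((-q.1 a : ℤ) : 𝕜) := by exact_mod_cast (neg_pos.mpr hqa).le
    rw [intAffine_add, intAffine_zsmul, intAffine_zsmul]
    exact add_nonneg (mul_nonneg hqa' (hx p hp)) (mul_nonneg hpa' (hx q hq))

theorem exists_intAffine_update_nonneg_of_fourierMotzkin [DecidableEq ι]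
    {S : Set ((ι → ℤ) × ℤ)} (hS : S.Finite) {a : ι} {x : ι → 𝕜}
    (hx : ∀ r ∈ fourierMotzkin S a, 0 ≤ intAffine r x) :
    ∃ y, ∀ p ∈ S, 0 ≤ intAffine p (Function.update x a y) := by
  -- the value of `y - x a` at which the inequality `p` becomes tight
  let β : (ι → ℤ) × ℤ → 𝕜 := fun p => -intAffine p x / p.1 a
  obtain ⟨τ, hlow, hup⟩ := ((hS.sep _).image β).exists_between_of_forall_le
      ((hS.sep _).image β) (by
    rintro _ ⟨p, ⟨hp, hpa⟩, rfl⟩ _ ⟨q, ⟨hq, hqa⟩, rfl⟩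
    have hpa' : (0 : 𝕜) < p.1 a := by exact_mod_cast hpa
    have hqa' : (q.1 a : 𝕜) < 0 := by exact_mod_cast hqa
    have h := hx _ (Or.inr ⟨p, ⟨hp, hpa⟩, q, ⟨hq, hqa⟩, rfl⟩)
    simp only [intAffine_add, intAffine_zsmul, Int.cast_neg] at h
    simp only [β, ← neg_div_neg_eq (-intAffine q x), neg_neg]
    rw [div_le_div_iff₀ hpa' (neg_pos.mpr hqa')]
    linarith)
  refine ⟨x a + τ, fun p hp => ?_⟩
  rw [intAffine_update, add_sub_cancel_left]
  rcases lt_trichotomy (p.1 a) 0 with hpa | hpa | hpa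
  · have hpa' : (p.1 a : 𝕜) < 0 := by exact_mod_cast hpa
    have h := hup ⟨p, ⟨hp, hpa⟩, rfl⟩
    rw [le_div_iff_of_neg hpa'] at h
    linarith
  · simpa [hpa] using hx p (Or.inl ⟨hp, hpa⟩)
  · have hpa' : (0 : 𝕜) < p.1 a := by exact_mod_cast hpa
    have h := hlow ⟨p, ⟨hp, hpa⟩, rfl⟩
    rw [div_le_iff₀ hpa'] at h
    linarith

namespace IsRationalPolyhedron

theorem setOf_eq_zero (p : (ι → ℤ) × ℤ) :
    IsRationalPolyhedron {x : ι → 𝕜 | intAffine p x = 0} := by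
  convert (setOf_nonneg p).inter (setOf_nonneg (-p)) using 1
  ext x
  simp [le_antisymm_iff, and_comm]

theorem exists_update [DecidableEq ι] {s : Set (ι → 𝕜)} (hs : IsRationalPolyhedron s) (a : ι) :
    IsRationalPolyhedron {x | ∃ y, Function.update x a y ∈ s} := by
  obtain ⟨S, hS, rfl⟩ := hs
  refine ⟨fourierMotzkin S a, hS.fourierMotzkin a, ?_⟩
  ext x
  refine ⟨fun ⟨y, hy⟩ r hr => ?_, exists_intAffine_update_nonneg_of_fourierMotzkin hS⟩
  have h := intAffine_nonneg_of_mem_fourierMotzkin hy hr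
  rwa [intAffine_update, coeff_eq_zero_of_mem_fourierMotzkin hr, Int.cast_zero, zero_mul,
    add_zero] at h

theorem exists_eqOn_compl [DecidableEq ι] {s : Set (ι → 𝕜)} (hs : IsRationalPolyhedron s)
    (T : Finset ι) : IsRationalPolyhedron {x | ∃ z ∈ s, EqOn z x (↑T)ᶜ} := by
  induction T using Finset.induction_on with
  | empty =>
    convert hs
    ext x
    simp [EqOn, ← funext_iff]
  | insert a T haT ih =>
    convert ih.exists_update a using 1
    ext x
    constructor
    · rintro ⟨z, hz, hzx⟩
      refine ⟨z a, z, hz, fun i hi => ?_⟩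
      rcases eq_or_ne i a with rfl | hia
      · simp
      · simpa [hia] using hzx (by simpa [hia] using hi)
    · rintro ⟨y, z, hz, hzx⟩
      refine ⟨z, hz, fun i hi => ?_⟩
      simp only [Finset.coe_insert, mem_compl_iff, mem_insert_iff, not_or] at hi
      simpa [hi.1] using hzx (show i ∉ (T : Set ι) from hi.2)

theorem exists_sumElim [Fintype κ] {s : Set (ι ⊕ κ → 𝕜)} (hs : IsRationalPolyhedron s) :
    IsRationalPolyhedron {x : ι → 𝕜 | ∃ w : κ → 𝕜, Sum.elim x w ∈ s} := by
  classical
  set T : Finset (ι ⊕ κ) := Finset.univ.map Function.Embedding.inr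
  obtain ⟨S, hS, hcyl⟩ := hs.exists_eqOn_compl T
  refine ⟨(fun p => (p.1 ∘ Sum.inl, p.2)) '' S, hS.image _, ?_⟩
  have hfiber : ∀ x : ι → 𝕜, (∃ w : κ → 𝕜, Sum.elim x w ∈ s) ↔
      Sum.elim x 0 ∈ {z | ∃ z' ∈ s, EqOn z' z (↑T)ᶜ} := by
    intro x
    constructor
    · rintro ⟨w, hw⟩
      refine ⟨_, hw, ?_⟩
      rintro (i | j) hij
      · rfl
      · simp [T] at hij
    · rintro ⟨z, hz, hzx⟩
      refine ⟨z ∘ Sum.inr, ?_⟩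
      convert hz using 1
      ext (i | j)
      · exact (@hzx (Sum.inl i) (by simp [T])).symm
      · rfl
  ext x
  rw [mem_ofPred_eq, hfiber, hcyl, mem_ofPred_eq, mem_ofPred_eq, Set.forall_mem_image]
  simp [intAffine, Fintype.sum_sum_type]

end IsRationalPolyhedron

end Field

theorem exists_pos_nat_mul_eq_intCast {α : Type*} [Finite α] (q : α → ℚ) :
    ∃ D : ℕ, 0 < D ∧ ∀ j, ∃ z : ℤ, (D : ℚ) * q j = z := by
  have := Fintype.ofFinite α
  refine ⟨∏ j, (q j).den, Finset.prod_pos fun j _ => (q j).pos, fun j => ?_⟩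
  obtain ⟨m, hm⟩ := Finset.dvd_prod_of_mem (fun j => (q j).den) (Finset.mem_univ j)
  refine ⟨(q j).num * m, ?_⟩
  rw [hm]
  push_cast
  rw [← Rat.mul_den_eq_num]
  ring

section ConvexHull

variable [Field 𝕜] [LinearOrder 𝕜] [IsStrictOrderedRing 𝕜]

/-- A point of `ι → 𝕜` (coordinates `Sum.inl`) together with barycentric weights on `t`
(coordinates `Sum.inr`) that represent it. -/
def convexHullLift (t : Finset (ι → 𝕜)) : Set (ι ⊕ t → 𝕜) :=
  {z | (∀ v, 0 ≤ z (.inr v)) ∧ ∑ v, z (.inr v) = 1 ∧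
    ∀ i, z (.inl i) = ∑ v, z (.inr v) * (v : ι → 𝕜) i}

theorem convexHull_eq_exists_sumElim_mem_convexHullLift (t : Finset (ι → 𝕜)) :
    convexHull 𝕜 (t : Set (ι → 𝕜)) = {x | ∃ w, Sum.elim x w ∈ convexHullLift t} := by
  ext x
  simp only [convexHullLift, mem_ofPred_eq, Sum.elim_inl, Sum.elim_inr]
  constructor
  · intro hx
    obtain ⟨w, hw0, hw1, rfl⟩ := Finset.mem_convexHull'.mp hx
    refine ⟨fun v => w v, fun v => hw0 v v.2, by rwa [Finset.sum_coe_sort t w], fun i => ?_⟩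
    simp only [Finset.sum_apply, Pi.smul_apply, smul_eq_mul]
    exact (Finset.sum_coe_sort t fun v => w v * v i).symm
  · rintro ⟨w, hw0, hw1, hx⟩
    exact mem_convexHull_of_exists_fintype w Subtype.val hw0 hw1 (fun v => v.2)
      (funext fun i => by simp only [Finset.sum_apply, Pi.smul_apply, smul_eq_mul, hx])

variable [Fintype ι]

theorem isRationalPolyhedron_convexHullLift {t : Finset (ι → 𝕜)}
    (ht : ∀ v ∈ t, ∀ i, ∃ q : ℚ, v i = q) : IsRationalPolyhedron (convexHullLift t) := by
  classical
  choose q hq using fun (v : t) i => ht v v.2 i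
  obtain ⟨D, hD, hDq⟩ := exists_pos_nat_mul_eq_intCast fun vi : t × ι => q vi.1 vi.2
  choose N hN using hDq
  have hDv : ∀ (v : t) i, (D : 𝕜) * (v : ι → 𝕜) i = N (v, i) := by
    intro v i
    rw [hq]
    exact_mod_cast congrArg (fun r : ℚ => (r : 𝕜)) (hN (v, i))
  have hD' : (D : 𝕜) ≠ 0 := by positivity
  have hL : convexHullLift t =
      (⋂ v, {z | 0 ≤ intAffine (Sum.elim 0 (Pi.single v 1), 0) z}) ∩
        {z | intAffine (Sum.elim 0 1, -1) z = 0} ∩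
        ⋂ i, {z | intAffine (Sum.elim (Pi.single i (D : ℤ)) fun v => -N (v, i), 0) z = 0} := by
    ext z
    simp only [convexHullLift, mem_inter_iff, mem_iInter, mem_ofPred_eq, intAffine,
      Fintype.sum_sum_type, Sum.elim_inl, Sum.elim_inr, Pi.zero_apply, Pi.one_apply,
      Int.cast_zero, zero_mul, Finset.sum_const_zero, zero_add, Int.cast_one, one_mul, and_assoc]
    refine and_congr ?_ (and_congr ?_ (forall_congr' fun i => ?_))
    · simp [Pi.single_apply]
    · rw [Int.cast_neg, Int.cast_one, neg_add_eq_zero, eq_comm]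
    · have hweights : ∑ v : t, ((-N (v, i) : ℤ) : 𝕜) * z (.inr v)
          = -(D * ∑ v : t, z (.inr v) * (v : ι → 𝕜) i) := by
        simp only [Int.cast_neg, ← hDv, Finset.mul_sum, ← Finset.sum_neg_distrib]
        exact Finset.sum_congr rfl fun v _ => by ring
      have hcoord : ∑ a, (((Pi.single i (D : ℤ) : ι → ℤ) a : ℤ) : 𝕜) * z (.inl a)
          = D * z (.inl i) := by
        simp [Pi.single_apply]
      rw [hcoord, hweights, add_neg_eq_zero, mul_right_inj' hD']
  rw [hL]
  exact ((IsRationalPolyhedron.iInter fun v => .setOf_nonneg _).inter (.setOf_eq_zero _)).inter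
    (.iInter fun i => .setOf_eq_zero _)

theorem isRationalPolyhedron_convexHull {t : Finset (ι → 𝕜)}
    (ht : ∀ v ∈ t, ∀ i, ∃ q : ℚ, v i = q) :
    IsRationalPolyhedron (convexHull 𝕜 (t : Set (ι → 𝕜))) := by
  rw [convexHull_eq_exists_sumElim_mem_convexHullLift]
  exact (isRationalPolyhedron_convexHullLift ht).exists_sumElim

end ConvexHull

section PiecewiseAffine

variable [Fintype ι] [CommRing 𝕜]

def IsIntPiecewiseAffineOn (s : Set (ι → 𝕜)) (f : (ι → 𝕜) → 𝕜) : Prop :=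
  ∃ F : Set ((ι → ℤ) × ℤ), F.Finite ∧ ∀ x ∈ s, ∃ p ∈ F, f x = intAffine p x

namespace IsIntPiecewiseAffineOn

variable {s : Set (ι → 𝕜)} {f g : (ι → 𝕜) → 𝕜}

theorem intAffine (p : (ι → ℤ) × ℤ) : IsIntPiecewiseAffineOn s (intAffine p) :=
  ⟨{p}, finite_singleton p, fun _ _ => ⟨p, rfl, rfl⟩⟩

theorem const (n : ℤ) : IsIntPiecewiseAffineOn s fun _ => (n : 𝕜) :=
  ⟨{(0, n)}, finite_singleton _, fun _ _ => ⟨(0, n), rfl, by simp [_root_.intAffine]⟩⟩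

theorem add (hf : IsIntPiecewiseAffineOn s f) (hg : IsIntPiecewiseAffineOn s g) :
    IsIntPiecewiseAffineOn s (f + g) := by
  obtain ⟨F, hF, hf⟩ := hf
  obtain ⟨G, hG, hg⟩ := hg
  refine ⟨image2 (· + ·) F G, hF.image2 _ hG, fun x hx => ?_⟩
  obtain ⟨p, hp, hfx⟩ := hf x hx
  obtain ⟨q, hq, hgx⟩ := hg x hx
  exact ⟨p + q, mem_image2_of_mem hp hq, by simp [hfx, hgx]⟩

theorem sum {α : Type*} (T : Finset α) {f : α → (ι → 𝕜) → 𝕜}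
    (hf : ∀ a ∈ T, IsIntPiecewiseAffineOn s (f a)) :
    IsIntPiecewiseAffineOn s fun x => ∑ a ∈ T, f a x := by
  classical
  induction T using Finset.induction_on with
  | empty => simpa using const (s := s) 0
  | insert a T haT ih =>
    simp only [Finset.sum_insert haT]
    exact (hf a (T.mem_insert_self a)).add (ih fun b hb => hf b (Finset.mem_insert_of_mem hb))

section LinearOrder

variable [LinearOrder 𝕜]

theorem max (hf : IsIntPiecewiseAffineOn s f) (hg : IsIntPiecewiseAffineOn s g) :
    IsIntPiecewiseAffineOn s fun x => max (f x) (g x) := by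
  obtain ⟨F, hF, hf⟩ := hf
  obtain ⟨G, hG, hg⟩ := hg
  refine ⟨F ∪ G, hF.union hG, fun x hx => ?_⟩
  dsimp only
  rcases max_choice (f x) (g x) with h | h <;> rw [h]
  · obtain ⟨p, hp, hfx⟩ := hf x hx
    exact ⟨p, Or.inl hp, hfx⟩
  · obtain ⟨q, hq, hgx⟩ := hg x hx
    exact ⟨q, Or.inr hq, hgx⟩

theorem min (hf : IsIntPiecewiseAffineOn s f) (hg : IsIntPiecewiseAffineOn s g) :
    IsIntPiecewiseAffineOn s fun x => min (f x) (g x) := by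
  obtain ⟨F, hF, hf⟩ := hf
  obtain ⟨G, hG, hg⟩ := hg
  refine ⟨F ∪ G, hF.union hG, fun x hx => ?_⟩
  dsimp only
  rcases min_choice (f x) (g x) with h | h <;> rw [h]
  · obtain ⟨p, hp, hfx⟩ := hf x hx
    exact ⟨p, Or.inl hp, hfx⟩
  · obtain ⟨q, hq, hgx⟩ := hg x hx
    exact ⟨q, Or.inr hq, hgx⟩

end LinearOrder

end IsIntPiecewiseAffineOn

end PiecewiseAffine

theorem isMcNaughton_of {n : ℕ} {f : (Fin n → ℝ) → ℝ} (hc : ContinuousOn f (cube n))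
    (hI : MapsTo f (cube n) (Icc 0 1)) (hp : IsIntPiecewiseAffineOn (cube n) f) :
    IsMcNaughton n f := by
  obtain ⟨F, hF, hfF⟩ := hp
  have := hF.to_subtype
  let e := Finite.equivFin F
  refine ⟨hc, hI, Nat.card F, fun j => (e.symm j).1.1, fun j => (e.symm j).1.2, fun x hx => ?_⟩
  obtain ⟨p, hp, hfx⟩ := hfF x hx
  exact ⟨e ⟨p, hp⟩, by simpa only [Equiv.symm_apply_apply, intAffine] using hfx⟩

section Oneset

variable [Fintype ι]

noncomputable def onesetFunction (S : Finset ((ι → ℤ) × ℤ)) (x : ι → ℝ) : ℝ :=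
  max 0 (1 + ∑ p ∈ S, min 0 (intAffine p x))

theorem onesetFunction_eq_one_iff (S : Finset ((ι → ℤ) × ℤ)) (x : ι → ℝ) :
    onesetFunction S x = 1 ↔ ∀ p ∈ S, 0 ≤ intAffine p x := by
  have hterm : ∀ p ∈ S, min 0 (intAffine p x) ≤ 0 := fun p _ => min_le_left _ _
  rw [onesetFunction, max_eq_iff]
  simp only [zero_ne_one, false_and, false_or, add_eq_left]
  rw [Finset.sum_eq_zero_iff_of_nonpos hterm]
  simp only [min_eq_left_iff]
  exact and_iff_left_of_imp fun h => by
    rw [Finset.sum_eq_zero fun p hp => min_eq_left (h p hp)]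
    norm_num

end Oneset

theorem isMcNaughton_onesetFunction {n : ℕ} (S : Finset ((Fin n → ℤ) × ℤ)) :
    IsMcNaughton n (onesetFunction S) := by
  refine isMcNaughton_of ?_ (fun x _ => ⟨le_max_left _ _, max_le zero_le_one ?_⟩) ?_
  · unfold onesetFunction intAffine
    fun_prop
  · simpa using Finset.sum_nonpos fun p (_ : p ∈ S) => min_le_left 0 (intAffine p x)
  · have h0 : IsIntPiecewiseAffineOn (cube n) fun _ => (0 : ℝ) := by
      simpa using IsIntPiecewiseAffineOn.const (s := cube n) 0
    have h1 : IsIntPiecewiseAffineOn (cube n) fun _ => (1 : ℝ) := by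
      simpa using IsIntPiecewiseAffineOn.const (s := cube n) 1
    exact h0.max (h1.add (.sum S fun p _ => h0.min (.intAffine p)))

theorem stmt13 (k : ℕ) (P : Set (Fin k → ℝ))
    (hP : ∃ t : Finset (Fin k → ℝ),
      (∀ v ∈ t, ∀ i, ∃ q : ℚ, v i = (q : ℝ)) ∧ P = convexHull ℝ ↑t)
    (hPc : P ⊆ cube k) :
    ∃ g : (Fin k → ℝ) → ℝ, IsMcNaughton k g ∧ {x ∈ cube k | g x = 1} = P := by
  obtain ⟨t, ht, rfl⟩ := hP
  obtain ⟨S, hS, hineq⟩ := isRationalPolyhedron_convexHull ht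
  refine ⟨onesetFunction hS.toFinset, isMcNaughton_onesetFunction _, ?_⟩
  have hone : ∀ x, onesetFunction hS.toFinset x = 1 ↔ x ∈ convexHull ℝ (t : Set (Fin k → ℝ)) := by
    simp [onesetFunction_eq_one_iff, hineq]
  simpa only [hone] using sep_eq_of_subset hPc
end
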